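/- (Weak-type estimate in the testing argument) In the setting of Lemma 3.1, with {Q_j^k} the sparse family of maximal dyadic cubes from the CZ decomposition of ℳ^𝒟_α(1_Rσ₁, fσ₂), set γ_j^k = (σ₁(Q_j^k)σ₂(Q_j^k)/|Q_j^k|^{2-α/n})^q v(E(Q_j^k)) for Q_j^k ⊆ R, and let γ be the measure on Ω_R = {(k,j): Q_j^k ⊆ R} assigning mass γ_j^k to (k,j). Then the sublinear operator T f = {𝔼^{σ₂}_{Q_j^k} |f|}_{(k,j)∈Ω_R} satisfies the weak-type bound γ{Tf > λ} ≤ C [w⃗,v]_S^q σ₁(R)^{q/p₁} (λ^{-1} ∫ |f|σ₂ dx)^{q/p₂} for all λ > 0, i.e., T maps L¹(σ₂) to L^{q/p₂,∞}(γ) with norm at most C^{p₂/q}[w⃗,v]_S^{p₂} σ₁(R)^{p₂/p₁}. -/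

import Mathlib

open MeasureTheory ENNReal Set
open scoped BigOperators

noncomputable section

abbrev Rn (n : ℕ) := Fin n → ℝ

/-- An axis-parallel half-open cube with corner `c` and side length `l`. -/
def cube {n : ℕ} (c : Rn n) (l : ℝ) : Set (Rn n) :=
  {x | ∀ i, c i ≤ x i ∧ x i < c i + l}

/-- `σ(Q) = ∫_Q σ dx`. -/
def wtI {n : ℕ} (σ : Rn n → ℝ≥0∞) (Q : Set (Rn n)) : ℝ≥0∞ := ∫⁻ x in Q, σ x

/-- `𝔼^σ_Q f = σ(Q)⁻¹ ∫_Q f σ`. -/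
def avgE {n : ℕ} (σ f : Rn n → ℝ≥0∞) (Q : Set (Rn n)) : ℝ≥0∞ :=
  (wtI σ Q)⁻¹ * ∫⁻ x in Q, f x * σ x

/-- The cube `2^{-k}([0,1)ⁿ + m + (-1)^k t)` of the shifted dyadic grid. -/
def gridCube (n : ℕ) (k : ℤ) (m : Fin n → ℤ) (t : Fin n → ℝ) : Set (Rn n) :=
  {x | ∀ i, (2:ℝ) ^ (-k) * ((m i : ℝ) + (-1:ℝ) ^ k * t i) ≤ x i ∧
       x i < (2:ℝ) ^ (-k) * ((m i : ℝ) + (-1:ℝ) ^ k * t i + 1)}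

/-- The shifted dyadic grid `𝒟_t`. -/
def shiftedGrid (n : ℕ) (t : Fin n → ℝ) : Set (Set (Rn n)) :=
  {Q | ∃ (k : ℤ) (m : Fin n → ℤ), Q = gridCube n k m t}

/-- Abstract dyadic grid: cubes of dyadic side lengths, nested or disjoint,
and for each scale the cubes of that side length cover `ℝⁿ`. -/
def IsDyadicGrid {n : ℕ} (𝒟 : Set (Set (Rn n))) : Prop :=
  (∀ Q ∈ 𝒟, ∃ (c : Rn n) (k : ℤ), Q = cube c ((2:ℝ) ^ k)) ∧
  (∀ Q ∈ 𝒟, ∀ R ∈ 𝒟, Q ∩ R = Q ∨ Q ∩ R = R ∨ Q ∩ R = ∅) ∧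
  (∀ k : ℤ, (⋃ Q ∈ {Q | Q ∈ 𝒟 ∧ ∃ c : Rn n, Q = cube c ((2:ℝ) ^ k)}, Q) = univ)

/-- The multilinear fractional maximal operator `ℳ_α`. -/
def MM (n m : ℕ) (α : ℝ) (g : Fin m → Rn n → ℝ≥0∞) (x : Rn n) : ℝ≥0∞ :=
  ⨆ (c : Rn n) (l : ℝ) (_ : 0 < l) (_ : x ∈ cube c l),
    ∏ i, (volume (cube c l) ^ (-(1 - α / ((m : ℝ) * (n : ℝ)))) * ∫⁻ y in cube c l, g i y)

/-- The multilinear fractional maximal operator restricted to a grid `𝒟`. -/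
def MMD (n m : ℕ) (α : ℝ) (𝒟 : Set (Set (Rn n))) (g : Fin m → Rn n → ℝ≥0∞)
    (x : Rn n) : ℝ≥0∞ :=
  ⨆ (Q : Set (Rn n)) (_ : Q ∈ 𝒟) (_ : x ∈ Q),
    ∏ i, (volume Q ^ (-(1 - α / ((m : ℝ) * (n : ℝ)))) * ∫⁻ y in Q, g i y)

/-- The bilinear fractional maximal operator `ℳ_α(g₁,g₂)`. -/
def M2 (n : ℕ) (α : ℝ) (g₁ g₂ : Rn n → ℝ≥0∞) (x : Rn n) : ℝ≥0∞ :=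
  ⨆ (c : Rn n) (l : ℝ) (_ : 0 < l) (_ : x ∈ cube c l),
    (volume (cube c l) ^ (-(1 - α / (2 * (n : ℝ)))) * ∫⁻ y in cube c l, g₁ y) *
      (volume (cube c l) ^ (-(1 - α / (2 * (n : ℝ)))) * ∫⁻ y in cube c l, g₂ y)

/-- The bilinear dyadic fractional maximal operator `ℳ^𝒟_α(g₁,g₂)`. -/
def M2D (n : ℕ) (α : ℝ) (𝒟 : Set (Set (Rn n))) (g₁ g₂ : Rn n → ℝ≥0∞) (x : Rn n) : ℝ≥0∞ :=
  ⨆ (Q : Set (Rn n)) (_ : Q ∈ 𝒟) (_ : x ∈ Q),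
    (volume Q ^ (-(1 - α / (2 * (n : ℝ)))) * ∫⁻ y in Q, g₁ y) *
      (volume Q ^ (-(1 - α / (2 * (n : ℝ)))) * ∫⁻ y in Q, g₂ y)

/-- Sawyer's bilinear testing constant `[w⃗,v]_{S_{P⃗,q}}`. -/
def sawyer2 (n : ℕ) (α p₁ p₂ q : ℝ) (σ₁ σ₂ v : Rn n → ℝ≥0∞) : ℝ≥0∞ :=
  ⨆ (c : Rn n) (l : ℝ) (_ : 0 < l),
    (∫⁻ x in cube c l,
        M2 n α ((cube c l).indicator σ₁) ((cube c l).indicator σ₂) x ^ q * v x) ^ (1/q) /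
      (wtI σ₁ (cube c l) ^ (1/p₁) * wtI σ₂ (cube c l) ^ (1/p₂))

/-- Sawyer's multilinear testing constant. -/
def sawyerM (n m : ℕ) (α q : ℝ) (p : Fin m → ℝ) (σ : Fin m → Rn n → ℝ≥0∞)
    (v : Rn n → ℝ≥0∞) : ℝ≥0∞ :=
  ⨆ (c : Rn n) (l : ℝ) (_ : 0 < l),
    (∫⁻ x in cube c l, MM n m α (fun i => (cube c l).indicator (σ i)) x ^ q * v x) ^ (1/q) /
      ∏ i, wtI (σ i) (cube c l) ^ (1 / p i)

/-- The principal cubes of `f` relative to `σ` inside `Qbar`, generation by generation. -/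
def principalCubes {n : ℕ} (𝒟 : Set (Set (Rn n))) (σ f : Rn n → ℝ≥0∞)
    (Qbar : Set (Rn n)) : ℕ → Set (Set (Rn n))
  | 0 => {Qbar}
  | k + 1 => {G' | G' ∈ 𝒟 ∧ ∃ G ∈ principalCubes 𝒟 σ f Qbar k, G' ⊆ G ∧
      4 * avgE σ f G < avgE σ f G' ∧
      ∀ G'' ∈ 𝒟, G' ⊆ G'' → G'' ⊆ G → 4 * avgE σ f G < avgE σ f G'' → G'' = G'}


/-!
Every selected cube `Q_i` (those with `𝔼^{σ₂}_{Q_i} f > λ`) lies in a maximal selected cube `G`,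
and the maximal ones are pairwise disjoint subcubes of `R`. For `x ∈ E_i ⊆ Q_i ⊆ G` the average
defining `γ_i` is one of the averages in `ℳ_α(1_G σ₁, 1_G σ₂)(x)`, so the disjointness of the `E_i`
and the testing condition bound the `γ`-mass of the cubes below `G` by
`[w⃗,v]_S^q σ₁(G)^{q/p₁} σ₂(G)^{q/p₂}`. Summing over `G`, using `q/p₂ ≥ 1` and
`σ₂(G) ≤ λ⁻¹ ∫_G f σ₂`, gives the estimate with `C = 1`.
-/

open Function

section Cubes

variable {n : ℕ}

lemma cube_eq_pi (c : Rn n) (l : ℝ) : cube c l = univ.pi fun i => Ico (c i) (c i + l) := by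
  ext x
  simp [cube, mem_pi]

lemma measurableSet_cube (c : Rn n) (l : ℝ) : MeasurableSet (cube c l) := by
  rw [cube_eq_pi]
  exact MeasurableSet.univ_pi fun _ => measurableSet_Ico

lemma volume_cube (c : Rn n) (l : ℝ) : volume (cube c l) = ENNReal.ofReal l ^ n := by
  simp [cube_eq_pi, volume_pi_pi, Real.volume_Ico]

lemma volume_cube_ne_zero (c : Rn n) {l : ℝ} (hl : 0 < l) : volume (cube c l) ≠ 0 := by
  rw [volume_cube]
  exact pow_ne_zero _ (ENNReal.ofReal_pos.mpr hl).ne'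

lemma volume_cube_ne_top (c : Rn n) (l : ℝ) : volume (cube c l) ≠ ∞ := by
  rw [volume_cube]
  exact pow_ne_top ofReal_ne_top

lemma cube_subset_cube_iff {c c' : Rn n} {l l' : ℝ} (hl : 0 < l) :
    cube c l ⊆ cube c' l' ↔ ∀ i, c' i ≤ c i ∧ c i + l ≤ c' i + l' := by
  have hne : ∀ i, Ico (c i) (c i + l) ≠ ∅ := fun i => (nonempty_Ico.2 (by linarith)).ne_empty
  simp only [cube_eq_pi, univ_pi_subset_univ_pi_iff, hne, exists_false, or_false]
  exact forall_congr' fun i => Ico_subset_Ico_iff (by linarith)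

lemma side_le_of_cube_subset_cube (hn : 0 < n) {c c' : Rn n} {l l' : ℝ} (hl : 0 < l)
    (h : cube c l ⊆ cube c' l') : l ≤ l' := by
  obtain ⟨h₁, h₂⟩ := (cube_subset_cube_iff hl).1 h ⟨0, hn⟩
  linarith

lemma cube_eq_of_cube_subset_cube (hn : 0 < n) {c c' : Rn n} {l l' : ℝ} (hl : 0 < l)
    (h : cube c l ⊆ cube c' l') (hl' : l' ≤ l) : cube c' l' = cube c l := by
  have hll' : l' = l := le_antisymm hl' (side_le_of_cube_subset_cube hn hl h)
  have hcc' : c' = c := funext fun i => by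
    have := (cube_subset_cube_iff hl).1 h i
    linarith
  rw [hll', hcc']

end Cubes

namespace IsDyadicGrid

variable {n : ℕ} {𝒟 𝒞 : Set (Set (Rn n))} {Q R : Set (Rn n)}

lemma exists_eq_cube (h𝒟 : IsDyadicGrid 𝒟) (hQ : Q ∈ 𝒟) : ∃ c l, 0 < l ∧ Q = cube c l := by
  obtain ⟨c, k, rfl⟩ := h𝒟.1 Q hQ
  exact ⟨c, _, zpow_pos two_pos k, rfl⟩

lemma measurableSet (h𝒟 : IsDyadicGrid 𝒟) (hQ : Q ∈ 𝒟) : MeasurableSet Q := by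
  obtain ⟨c, l, -, rfl⟩ := h𝒟.exists_eq_cube hQ
  exact measurableSet_cube c l

lemma subset_or_subset_or_disjoint (h𝒟 : IsDyadicGrid 𝒟) (hQ : Q ∈ 𝒟) (hR : R ∈ 𝒟) :
    Q ⊆ R ∨ R ⊆ Q ∨ Disjoint Q R := by
  rcases h𝒟.2.1 Q hQ R hR with h | h | h
  · exact Or.inl (inter_eq_left.1 h)
  · exact Or.inr (Or.inl (inter_eq_right.1 h))
  · exact Or.inr (Or.inr (disjoint_iff_inter_eq_empty.2 h))

lemma pairwise_disjoint_maximal (h𝒟 : IsDyadicGrid 𝒟) (h𝒞 : 𝒞 ⊆ 𝒟) :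
    Pairwise (Disjoint on fun G : {G // Maximal (· ∈ 𝒞) G} => G.1) := by
  rintro ⟨G, hG⟩ ⟨G', hG'⟩ hne
  rcases h𝒟.subset_or_subset_or_disjoint (h𝒞 hG.1) (h𝒞 hG'.1) with h | h | h
  · exact absurd (Subtype.ext (le_antisymm h (hG.2 hG'.1 h))) hne
  · exact absurd (Subtype.ext (le_antisymm (hG'.2 hG.1 h) h)) hne
  · exact h

/-- Cubes of a grid inside `R` have sides at most that of `R`, so among those containing `A` one
of largest side exists. -/
lemma exists_maximal_superset (h𝒟 : IsDyadicGrid 𝒟) (hn : 0 < n) (h𝒞 : 𝒞 ⊆ 𝒟)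
    (hR : R ∈ 𝒟) (h𝒞R : ∀ G ∈ 𝒞, G ⊆ R) {A : Set (Rn n)} (hA : A ∈ 𝒞) :
    ∃ G, A ⊆ G ∧ Maximal (· ∈ 𝒞) G := by
  obtain ⟨cR, kR, rfl⟩ := h𝒟.1 R hR
  let P : ℤ → Prop := fun k => ∃ G ∈ 𝒞, A ⊆ G ∧ ∃ c, G = cube c ((2:ℝ) ^ k)
  have hP : ∀ k, P k → k ≤ kR := by
    rintro k ⟨G, hG, -, c, rfl⟩
    exact (zpow_le_zpow_iff_right₀ (one_lt_two : (1:ℝ) < 2)).1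
      (side_le_of_cube_subset_cube hn (zpow_pos two_pos k) (h𝒞R _ hG))
  obtain ⟨c, k, hA'⟩ := h𝒟.1 A (h𝒞 hA)
  obtain ⟨km, ⟨G, hG, hAG, cG, rfl⟩, hkm⟩ :=
    Int.exists_greatest_of_bdd ⟨kR, hP⟩ ⟨k, A, hA, subset_rfl, c, hA'⟩
  refine ⟨_, hAG, hG, fun G' hG' hGG' => ?_⟩
  obtain ⟨c', k', rfl⟩ := h𝒟.1 G' (h𝒞 hG')
  have hk' : k' ≤ km := hkm k' ⟨_, hG', hAG.trans hGG', c', rfl⟩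
  exact (cube_eq_of_cube_subset_cube hn (zpow_pos two_pos km) hGG'
    ((zpow_le_zpow_iff_right₀ (one_lt_two : (1:ℝ) < 2)).2 hk')).le

end IsDyadicGrid

section Testing

variable {n : ℕ} {α p₁ p₂ q : ℝ} {σ₁ σ₂ v : Rn n → ℝ≥0∞}

/-- The quantity `σ₁(Q) σ₂(Q) / |Q|^{2 - α/n}` whose `q`-th power weights `γ`. -/
def fracAvg2 (n : ℕ) (α : ℝ) (σ₁ σ₂ : Rn n → ℝ≥0∞) (Q : Set (Rn n)) : ℝ≥0∞ :=
  wtI σ₁ Q * wtI σ₂ Q * volume Q ^ (α / (n : ℝ) - 2)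

lemma M2_mono {g₁ g₂ g₁' g₂' : Rn n → ℝ≥0∞} (h₁ : g₁ ≤ g₁') (h₂ : g₂ ≤ g₂') :
    M2 n α g₁ g₂ ≤ M2 n α g₁' g₂' := fun _ =>
  iSup_mono fun _ => iSup_mono fun _ => iSup_mono fun _ => iSup_mono fun _ =>
    mul_le_mul' (mul_le_mul_right (lintegral_mono fun y => h₁ y) _)
      (mul_le_mul_right (lintegral_mono fun y => h₂ y) _)

lemma M2_indicator_mono {G G' : Set (Rn n)} (h : G ⊆ G') :
    M2 n α (G.indicator σ₁) (G.indicator σ₂) ≤ M2 n α (G'.indicator σ₁) (G'.indicator σ₂) :=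
  M2_mono (indicator_le_indicator_of_subset h fun _ => zero_le)
    (indicator_le_indicator_of_subset h fun _ => zero_le)

lemma fracAvg2_le_M2_indicator (hn : n ≠ 0) {c : Rn n} {l : ℝ} (hl : 0 < l) {x : Rn n}
    (hx : x ∈ cube c l) :
    fracAvg2 n α σ₁ σ₂ (cube c l) ≤
      M2 n α ((cube c l).indicator σ₁) ((cube c l).indicator σ₂) x := by
  have hvol : volume (cube c l) ^ (α / (n : ℝ) - 2) =
      volume (cube c l) ^ (-(1 - α / (2 * (n : ℝ)))) *
        volume (cube c l) ^ (-(1 - α / (2 * (n : ℝ)))) := by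
    rw [← ENNReal.rpow_add _ _ (volume_cube_ne_zero c hl) (volume_cube_ne_top c l)]
    congr 1
    field_simp
    ring
  refine le_iSup_of_le c <| le_iSup_of_le l <| le_iSup_of_le hl <| le_iSup_of_le hx ?_
  simp only [lintegral_indicator (measurableSet_cube c l), Measure.restrict_restrict
    (measurableSet_cube c l), inter_self, fracAvg2, wtI, hvol]
  exact le_of_eq (by ring)

lemma M2_indicator_eq_zero {G : Set (Rn n)} (hG : MeasurableSet G)
    (h0 : wtI σ₁ G = 0 ∨ wtI σ₂ G = 0) (x : Rn n) :
    M2 n α (G.indicator σ₁) (G.indicator σ₂) x = 0 := by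
  have hz : ∀ σ : Rn n → ℝ≥0∞, wtI σ G = 0 → ∀ s, ∫⁻ y in s, G.indicator σ y = 0 :=
    fun σ hσ s => nonpos_iff_eq_zero.1 <|
      (setLIntegral_le_lintegral _ _).trans ((lintegral_indicator hG σ).trans_le hσ.le)
  rcases h0 with h | h <;> simp [M2, hz _ h]

lemma setLIntegral_M2_rpow_le_sawyer2 (hp₁ : 0 ≤ p₁) (hp₂ : 0 ≤ p₂) (hq : 0 < q)
    {c : Rn n} {l : ℝ} (hl : 0 < l) (h₁ : wtI σ₁ (cube c l) ≠ ∞) (h₂ : wtI σ₂ (cube c l) ≠ ∞) :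
    ∫⁻ x in cube c l, M2 n α ((cube c l).indicator σ₁) ((cube c l).indicator σ₂) x ^ q * v x
      ≤ sawyer2 n α p₁ p₂ q σ₁ σ₂ v ^ q *
        wtI σ₁ (cube c l) ^ (q / p₁) * wtI σ₂ (cube c l) ^ (q / p₂) := by
  set A := ∫⁻ x in cube c l,
    M2 n α ((cube c l).indicator σ₁) ((cube c l).indicator σ₂) x ^ q * v x
  set B := wtI σ₁ (cube c l) ^ (1 / p₁) * wtI σ₂ (cube c l) ^ (1 / p₂) with hB
  by_cases h0 : wtI σ₁ (cube c l) = 0 ∨ wtI σ₂ (cube c l) = 0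
  · have hA : A = 0 := by
      simp [A, M2_indicator_eq_zero (measurableSet_cube c l) h0, zero_rpow_of_pos hq]
    simp [hA]
  rw [not_or] at h0
  have hB0 : B ≠ 0 := mul_ne_zero (ENNReal.rpow_pos (pos_iff_ne_zero.2 h0.1) h₁).ne'
    (ENNReal.rpow_pos (pos_iff_ne_zero.2 h0.2) h₂).ne'
  have hBtop : B ≠ ∞ := mul_ne_top (rpow_ne_top_of_nonneg (by positivity) h₁)
    (rpow_ne_top_of_nonneg (by positivity) h₂)
  have hS : A ^ (1 / q) ≤ sawyer2 n α p₁ p₂ q σ₁ σ₂ v * B :=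
    (ENNReal.div_le_iff hB0 hBtop).1 <|
      le_iSup_of_le c <| le_iSup_of_le l <| le_iSup_of_le hl le_rfl
  calc A = (A ^ (1 / q)) ^ q := by rw [← ENNReal.rpow_mul, one_div_mul_cancel hq.ne', rpow_one]
    _ ≤ (sawyer2 n α p₁ p₂ q σ₁ σ₂ v * B) ^ q := rpow_le_rpow hS hq.le
    _ = _ := by
      rw [mul_rpow_of_nonneg _ _ hq.le, hB, mul_rpow_of_nonneg _ _ hq.le, ← ENNReal.rpow_mul,
        ← ENNReal.rpow_mul, one_div_mul_eq_div, one_div_mul_eq_div, mul_assoc]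

lemma tsum_setLIntegral_le {X ι : Type*} [MeasurableSpace X] [Countable ι] {μ : Measure X}
    {s : ι → Set X} {t : Set X} (hs : ∀ i, MeasurableSet (s i))
    (hd : Pairwise (Disjoint on s)) (hst : ∀ i, s i ⊆ t) (f : X → ℝ≥0∞) :
    ∑' i, ∫⁻ x in s i, f x ∂μ ≤ ∫⁻ x in t, f x ∂μ := by
  rw [← lintegral_iUnion hs hd]
  exact lintegral_mono_set (iUnion_subset hst)

lemma tsum_fracAvg2_rpow_mul_wtI_le {J : Type*} [Countable J] (hn : n ≠ 0)
    (hp₁ : 0 ≤ p₁) (hp₂ : 0 ≤ p₂) (hq : 0 < q) {Q E : J → Set (Rn n)}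
    (hQ : ∀ j, ∃ c l, 0 < l ∧ Q j = cube c l) (hEQ : ∀ j, E j ⊆ Q j)
    (hE : ∀ j, MeasurableSet (E j)) (hEd : Pairwise (Disjoint on E)) {c : Rn n} {l : ℝ}
    (hl : 0 < l) (hQG : ∀ j, Q j ⊆ cube c l)
    (h₁ : wtI σ₁ (cube c l) ≠ ∞) (h₂ : wtI σ₂ (cube c l) ≠ ∞) :
    ∑' j, fracAvg2 n α σ₁ σ₂ (Q j) ^ q * wtI v (E j)
      ≤ sawyer2 n α p₁ p₂ q σ₁ σ₂ v ^ q *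
        wtI σ₁ (cube c l) ^ (q / p₁) * wtI σ₂ (cube c l) ^ (q / p₂) := by
  set F := fun x => M2 n α ((cube c l).indicator σ₁) ((cube c l).indicator σ₂) x ^ q * v x
  have hterm : ∀ j, fracAvg2 n α σ₁ σ₂ (Q j) ^ q * wtI v (E j) ≤ ∫⁻ x in E j, F x := by
    intro j
    obtain ⟨c', l', hl', hQj⟩ := hQ j
    refine (lintegral_const_mul_le _ _).trans (setLIntegral_mono' (hE j) fun x hx => ?_)
    have hx' : x ∈ cube c' l' := hQj ▸ hEQ j hx
    refine mul_le_mul_left (rpow_le_rpow ?_ hq.le) _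
    rw [hQj]
    exact (fracAvg2_le_M2_indicator hn hl' hx').trans (M2_indicator_mono (hQj ▸ hQG j) x)
  calc _ ≤ ∑' j, ∫⁻ x in E j, F x := ENNReal.tsum_le_tsum hterm
    _ ≤ ∫⁻ x in cube c l, F x := tsum_setLIntegral_le hE hEd (fun j => (hEQ j).trans (hQG j)) F
    _ ≤ _ := setLIntegral_M2_rpow_le_sawyer2 hp₁ hp₂ hq hl h₁ h₂

end Testing

lemma ENNReal.tsum_rpow_mul_rpow_le {β : Type*} {s t : ℝ} (hs : 0 ≤ s) (ht : 1 ≤ t)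
    (a b : β → ℝ≥0∞) : ∑' i, a i ^ s * b i ^ t ≤ (∑' i, a i) ^ s * (∑' i, b i) ^ t := by
  have hsplit : ∀ x : ℝ≥0∞, x ^ t = x ^ (t - 1) * x := fun x => by
    simpa using rpow_add_of_nonneg (x := x) (t - 1) 1 (by linarith) zero_le_one
  calc ∑' i, a i ^ s * b i ^ t
      ≤ ∑' i, (∑' j, a j) ^ s * ((∑' j, b j) ^ (t - 1) * b i) := by
        refine ENNReal.tsum_le_tsum fun i => ?_
        rw [hsplit]
        exact mul_le_mul' (rpow_le_rpow (ENNReal.le_tsum i) hs)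
          (mul_le_mul_left (rpow_le_rpow (ENNReal.le_tsum i) (by linarith)) _)
    _ = (∑' i, a i) ^ s * (∑' i, b i) ^ t := by
        rw [ENNReal.tsum_mul_left, ENNReal.tsum_mul_left, ← hsplit]

section WeakType

variable {n : ℕ} {σ σ₁ σ₂ f : Rn n → ℝ≥0∞} {lam : ℝ≥0∞}

lemma wtI_le_of_lt_avgE {G : Set (Rn n)} (hlam : 0 < lam) (h : lam < avgE σ f G)
    (hfin : wtI σ G ≠ ∞) : wtI σ G ≤ lam⁻¹ * ∫⁻ x in G, f x * σ x := by
  rcases eq_or_ne (wtI σ G) 0 with h0 | h0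
  · simp [h0]
  have hle : lam * wtI σ G ≤ ∫⁻ x in G, f x * σ x :=
    (ENNReal.le_div_iff_mul_le (Or.inl h0) (Or.inl hfin)).1 <| by
      rw [ENNReal.div_eq_inv_mul]
      exact h.le
  exact (mul_le_iff_le_inv hlam.ne' (h.trans_le le_top).ne).1 hle

lemma tsum_wtI_rpow_mul_wtI_rpow_le {J : Type*} [Countable J] {G : J → Set (Rn n)}
    {R : Set (Rn n)} {s t : ℝ} (hs : 0 ≤ s) (ht : 1 ≤ t) (hG : ∀ j, MeasurableSet (G j))
    (hGd : Pairwise (Disjoint on G)) (hGR : ∀ j, G j ⊆ R) (hlam : 0 < lam)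
    (hGlam : ∀ j, lam < avgE σ₂ f (G j)) (hfin : ∀ j, wtI σ₂ (G j) ≠ ∞) :
    ∑' j, wtI σ₁ (G j) ^ s * wtI σ₂ (G j) ^ t
      ≤ wtI σ₁ R ^ s * (lam⁻¹ * ∫⁻ x, f x * σ₂ x) ^ t := by
  have h₁ : ∑' j, wtI σ₁ (G j) ≤ wtI σ₁ R := tsum_setLIntegral_le hG hGd hGR σ₁
  have h₂ : ∑' j, wtI σ₂ (G j) ≤ lam⁻¹ * ∫⁻ x, f x * σ₂ x :=
    calc ∑' j, wtI σ₂ (G j) ≤ ∑' j, lam⁻¹ * ∫⁻ x in G j, f x * σ₂ x :=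
          ENNReal.tsum_le_tsum fun j => wtI_le_of_lt_avgE hlam (hGlam j) (hfin j)
      _ ≤ lam⁻¹ * ∫⁻ x, f x * σ₂ x := by
          rw [ENNReal.tsum_mul_left, ← setLIntegral_univ]
          exact mul_le_mul_right (tsum_setLIntegral_le hG hGd (fun _ => subset_univ _) _) _
  exact (ENNReal.tsum_rpow_mul_rpow_le hs ht _ _).trans
    (mul_le_mul' (rpow_le_rpow h₁ hs) (rpow_le_rpow h₂ (by linarith)))

end WeakType

theorem tsum_fracAvg2_rpow_mul_wtI_le_of_lt_avgE {n : ℕ} (hn : 0 < n) {α p₁ p₂ q : ℝ}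
    (hp₁ : 0 < p₁) (hp₂ : 0 < p₂) (hqp₂ : p₂ ≤ q) {σ₁ σ₂ v f : Rn n → ℝ≥0∞}
    (h₁ : ∀ c l, wtI σ₁ (cube c l) ≠ ∞) (h₂ : ∀ c l, wtI σ₂ (cube c l) ≠ ∞)
    {𝒟 : Set (Set (Rn n))} (h𝒟 : IsDyadicGrid 𝒟) {R : Set (Rn n)} (hR : R ∈ 𝒟)
    {ι : Type*} [Countable ι] {Q E : ι → Set (Rn n)} (hQ𝒟 : ∀ i, Q i ∈ 𝒟) (hQR : ∀ i, Q i ⊆ R)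
    (hEQ : ∀ i, E i ⊆ Q i) (hE : ∀ i, MeasurableSet (E i)) (hEd : Pairwise (Disjoint on E))
    {lam : ℝ≥0∞} (hlam : 0 < lam) :
    ∑' i : {i : ι // lam < avgE σ₂ f (Q i)}, fracAvg2 n α σ₁ σ₂ (Q i.1) ^ q * wtI v (E i.1)
      ≤ sawyer2 n α p₁ p₂ q σ₁ σ₂ v ^ q * wtI σ₁ R ^ (q / p₁) *
        (lam⁻¹ * ∫⁻ x, f x * σ₂ x) ^ (q / p₂) := by
  set S := {i : ι // lam < avgE σ₂ f (Q i)}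
  set 𝒞 := range fun i : S => Q i.1
  have h𝒞 : 𝒞 ⊆ 𝒟 := range_subset_iff.2 fun i => hQ𝒟 i.1
  set M := {G | Maximal (· ∈ 𝒞) G}
  have : Countable M := ((countable_range _).mono fun _ hG => hG.1 : M.Countable).to_subtype
  choose g hQg hgM using fun i : S => h𝒟.exists_maximal_superset hn h𝒞 hR
    (range_subset_iff.2 fun i => hQR i.1) (mem_range_self i)
  let g' : S → M := fun i => ⟨g i, hgM i⟩
  have hM𝒟 : ∀ G : M, G.1 ∈ 𝒟 := fun G => h𝒞 G.2.1
  have hMlam : ∀ G : M, lam < avgE σ₂ f G.1 := by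
    rintro ⟨_, ⟨i, rfl⟩, -⟩
    exact i.2
  have hq : 0 < q := hp₂.trans_le hqp₂
  have hfiber : ∀ G : M, ∑' i : g' ⁻¹' {G}, fracAvg2 n α σ₁ σ₂ (Q i.1.1) ^ q * wtI v (E i.1.1)
      ≤ sawyer2 n α p₁ p₂ q σ₁ σ₂ v ^ q * (wtI σ₁ G ^ (q / p₁) * wtI σ₂ G ^ (q / p₂)) := by
    intro G
    obtain ⟨c, l, hl, hG⟩ := h𝒟.exists_eq_cube (hM𝒟 G)
    rw [← mul_assoc, hG]
    refine tsum_fracAvg2_rpow_mul_wtI_le hn.ne' hp₁.le hp₂.le hq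
      (fun i => h𝒟.exists_eq_cube (hQ𝒟 _)) (fun i => hEQ _) (fun i => hE _)
      (hEd.comp_of_injective (Subtype.val_injective.comp Subtype.val_injective)) hl
      (fun i => ?_) (h₁ c l) (h₂ c l)
    rw [← hG, ← show (g' i.1).1 = G.1 from congrArg Subtype.val i.2]
    exact hQg i.1
  calc _ = ∑' G : M, ∑' i : g' ⁻¹' {G}, fracAvg2 n α σ₁ σ₂ (Q i.1.1) ^ q * wtI v (E i.1.1) :=
        (ENNReal.tsum_fiberwise _ g').symm
    _ ≤ ∑' G : M, sawyer2 n α p₁ p₂ q σ₁ σ₂ v ^ q *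
          (wtI σ₁ G ^ (q / p₁) * wtI σ₂ G ^ (q / p₂)) := ENNReal.tsum_le_tsum hfiber
    _ ≤ sawyer2 n α p₁ p₂ q σ₁ σ₂ v ^ q *
          (wtI σ₁ R ^ (q / p₁) * (lam⁻¹ * ∫⁻ x, f x * σ₂ x) ^ (q / p₂)) := by
        rw [ENNReal.tsum_mul_left]
        refine mul_le_mul_right (tsum_wtI_rpow_mul_wtI_rpow_le (by positivity)
          ((one_le_div hp₂).2 hqp₂) (fun G => h𝒟.measurableSet (hM𝒟 G))
          (h𝒟.pairwise_disjoint_maximal h𝒞) (fun G => ?_) hlam hMlam fun G => ?_) _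
        · obtain ⟨_, ⟨i, rfl⟩, -⟩ := G
          exact hQR i.1
        · obtain ⟨c, l, -, hG⟩ := h𝒟.exists_eq_cube (hM𝒟 G)
          exact hG ▸ h₂ c l
    _ = _ := (mul_assoc _ _ _).symm

theorem stmt10_general (n : ℕ) (hn : 0 < n) (α p₁ p₂ q : ℝ)
    (hp₁ : 1 < p₁) (hp₂ : 1 < p₂) (hqp₂ : p₂ ≤ q) :
    ∃ C : ℝ≥0∞, C ≠ ∞ ∧
      ∀ (w₁ w₂ v σ₁ σ₂ : Rn n → ℝ≥0∞),
        Measurable w₁ → Measurable w₂ → Measurable v →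
        σ₁ = (fun x => w₁ x ^ (1 - p₁/(p₁-1))) →
        σ₂ = (fun x => w₂ x ^ (1 - p₂/(p₂-1))) →
        (∀ (c : Rn n) (l : ℝ), wtI σ₁ (cube c l) ≠ ∞) →
        (∀ (c : Rn n) (l : ℝ), wtI σ₂ (cube c l) ≠ ∞) →
        (∀ (c : Rn n) (l : ℝ), wtI v (cube c l) ≠ ∞) →
        ∀ (𝒟 : Set (Set (Rn n))), IsDyadicGrid 𝒟 →
        ∀ R ∈ 𝒟, ∀ f : Rn n → ℝ≥0∞, Measurable f → (∀ x ∉ R, f x = 0) →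
        ∀ (ι : Type) (_ : Countable ι) (Q E : ι → Set (Rn n)),
          (∀ i, Q i ∈ 𝒟) → (∀ i, Q i ⊆ R) → (∀ i, E i ⊆ Q i) →
          (∀ i, MeasurableSet (E i)) →
          (Pairwise fun i j => Disjoint (E i) (E j)) →
          ∀ lam : ℝ≥0∞, 0 < lam →
            ∑' i : {i : ι // lam < avgE σ₂ f (Q i)},
                (wtI σ₁ (Q i.1) * wtI σ₂ (Q i.1) * volume (Q i.1) ^ (α/(n:ℝ) - 2)) ^ q *
                  wtI v (E i.1)
              ≤ C * sawyer2 n α p₁ p₂ q σ₁ σ₂ v ^ q * wtI σ₁ R ^ (q/p₁) *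
                  (lam⁻¹ * ∫⁻ x, f x * σ₂ x) ^ (q/p₂) := by
  refine ⟨1, one_ne_top, ?_⟩
  intro w₁ w₂ v σ₁ σ₂ _ _ _ _ _ h₁ h₂ _ 𝒟 h𝒟 R hR f _ _ ι _ Q E hQ𝒟 hQR hEQ hE hEd lam hlam
  rw [one_mul]
  exact tsum_fracAvg2_rpow_mul_wtI_le_of_lt_avgE hn (by linarith) (by linarith) hqp₂ h₁ h₂ h𝒟 hR
    hQ𝒟 hQR hEQ hE hEd hlam

/-- weak-type estimate for the level-set measure `γ` in the
testing argument of Lemma 3.1. -/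
theorem stmt10 (n : ℕ) (hn : 0 < n) (α p₁ p₂ p q : ℝ)
    (hα0 : 0 ≤ α) (hα : α < 2 * n) (hp₁ : 1 < p₁) (hp₂ : 1 < p₂)
    (hp : 1/p = 1/p₁ + 1/p₂) (hq : 1/q = 1/p - α/n) (hqp₂ : p₂ ≤ q) :
    ∃ C : ℝ≥0∞, C ≠ ∞ ∧
      ∀ (w₁ w₂ v σ₁ σ₂ : Rn n → ℝ≥0∞),
        Measurable w₁ → Measurable w₂ → Measurable v →
        σ₁ = (fun x => w₁ x ^ (1 - p₁/(p₁-1))) →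
        σ₂ = (fun x => w₂ x ^ (1 - p₂/(p₂-1))) →
        (∀ (c : Rn n) (l : ℝ), wtI σ₁ (cube c l) ≠ ∞) →
        (∀ (c : Rn n) (l : ℝ), wtI σ₂ (cube c l) ≠ ∞) →
        (∀ (c : Rn n) (l : ℝ), wtI v (cube c l) ≠ ∞) →
        ∀ (𝒟 : Set (Set (Rn n))), IsDyadicGrid 𝒟 →
        ∀ R ∈ 𝒟, ∀ f : Rn n → ℝ≥0∞, Measurable f → (∀ x ∉ R, f x = 0) →
        ∀ (ι : Type) (_ : Countable ι) (Q E : ι → Set (Rn n)),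
          (∀ i, Q i ∈ 𝒟) → (∀ i, Q i ⊆ R) → (∀ i, E i ⊆ Q i) →
          (∀ i, MeasurableSet (E i)) →
          (Pairwise fun i j => Disjoint (E i) (E j)) →
          ∀ lam : ℝ≥0∞, 0 < lam →
            ∑' i : {i : ι // lam < avgE σ₂ f (Q i)},
                (wtI σ₁ (Q i.1) * wtI σ₂ (Q i.1) * volume (Q i.1) ^ (α/(n:ℝ) - 2)) ^ q *
                  wtI v (E i.1)
              ≤ C * sawyer2 n α p₁ p₂ q σ₁ σ₂ v ^ q * wtI σ₁ R ^ (q/p₁) *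
                  (lam⁻¹ * ∫⁻ x, f x * σ₂ x) ^ (q/p₂) :=
  stmt10_general n hn α p₁ p₂ q hp₁ hp₂ hqp₂
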